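/- arXiv:math/0606060 — 2 statements merged into one kernel-verified Lean document; each statement's English description precedes it below -/
import Mathlib

section
/- Let μ, ν be compactly supported regular Borel measures on ℝⁿ with μ ≺ ν in the decomposition sense: for every finite decomposition μ = Σᵢ μᵢ into positive measures there exist positive measures νᵢ with Σᵢ νᵢ = ν, νᵢ(1) = μᵢ(1), and νᵢ(πⱼ) = μᵢ(πⱼ) for all i, j. Then μ(f) ≤ ν(f) for every continuous convex function f : ℝⁿ → ℝ. -/
/-!
Partition the common compact support of `μ` and `ν` into finitely many measurable pieces
`S i` so small that `f` oscillates by less than `ε` on the closed convex hull of each piece,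
and decompose `μ = ∑ i, μ.restrict (S i)`. The barycenter `b i` of `μ.restrict (S i)` lies in
that hull, so `∫ f ∂μ.restrict (S i) ≤ w i * (f (b i) + ε)` where `w i` is the mass. The matching
piece `νs i` has the same mass `w i` and barycenter `b i`, so Jensen's inequality gives
`w i * f (b i) ≤ ∫ f ∂νs i`. Summing over `i` and letting `ε → 0` proves the claim.
-/

open MeasureTheory Set Metric Function

lemma le_of_forall_pos_le_add_mul {a b c : ℝ} (hc : 0 ≤ c) (h : ∀ ε > 0, a ≤ b + ε * c) :
    a ≤ b := by
  refine le_of_forall_pos_le_add fun ε hε => (h (ε / (c + 1)) (by positivity)).trans ?_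
  gcongr
  rw [div_mul_eq_mul_div, div_le_iff₀ (by positivity)]
  nlinarith

theorem MeasurableSet.disjointed_of_locallyFiniteOrderBot {α ι : Type*} [MeasurableSpace α]
    [Preorder ι] [LocallyFiniteOrderBot ι] {B : ι → Set α} (hB : ∀ i, MeasurableSet (B i))
    (i : ι) : MeasurableSet (disjointed B i) := by
  rw [disjointed, Finset.sup_set_eq_biUnion]
  exact (hB i).diff (Finset.measurableSet_biUnion _ fun j _ => hB j)

theorem IsCompact.exists_measurable_partition_diam_lt {X : Type*} [MetricSpace X]
    [MeasurableSpace X] [OpensMeasurableSpace X] {K : Set X} (hK : IsCompact K) {δ : ℝ}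
    (hδ : 0 < δ) :
    ∃ (m : ℕ) (S : Fin m → Set X), (∀ i, MeasurableSet (S i)) ∧ Pairwise (Disjoint on S) ∧
      ⋃ i, S i = K ∧ ∀ i, diam (S i) < δ := by
  obtain ⟨t, -, ht, hKt⟩ := hK.finite_cover_balls (e := δ / 3) (by positivity)
  obtain ⟨m, c, rfl⟩ := ht.fin_embedding
  set B : Fin m → Set X := fun i => K ∩ ball (c i) (δ / 3)
  refine ⟨m, disjointed B, .disjointed_of_locallyFiniteOrderBot
    fun i => hK.measurableSet.inter measurableSet_ball, disjoint_disjointed B, ?_, fun i => ?_⟩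
  · rw [iUnion_disjointed, ← inter_iUnion, inter_eq_left]
    simpa only [biUnion_range] using hKt
  · calc diam (disjointed B i) ≤ diam (ball (c i) (δ / 3)) :=
          diam_mono ((disjointed_subset B i).trans inter_subset_right) isBounded_ball
      _ ≤ 2 * (δ / 3) := diam_ball (by positivity)
      _ < δ := by linarith

theorem IsCompact.exists_measurable_partition_dist_lt {E : Type*} [NormedAddCommGroup E]
    [NormedSpace ℝ E] [MeasurableSpace E] [OpensMeasurableSpace E] {K : Set E}
    (hK : IsCompact K) (hKc : Convex ℝ K) {f : E → ℝ} (hf : ContinuousOn f K) {ε : ℝ}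
    (hε : 0 < ε) :
    ∃ (m : ℕ) (S : Fin m → Set E), (∀ i, MeasurableSet (S i)) ∧ Pairwise (Disjoint on S) ∧
      ⋃ i, S i = K ∧
        ∀ i, ∀ x ∈ S i, ∀ y ∈ closure (convexHull ℝ (S i)), dist (f x) (f y) < ε := by
  obtain ⟨δ, hδ, hfδ⟩ := Metric.uniformContinuousOn_iff.1
    (hK.uniformContinuousOn_of_continuous hf) ε hε
  obtain ⟨m, S, hSm, hSd, hSK, hSδ⟩ := hK.exists_measurable_partition_diam_lt hδ
  refine ⟨m, S, hSm, hSd, hSK, fun i x hx y hy => ?_⟩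
  have hSiK : S i ⊆ K := hSK ▸ subset_iUnion S i
  have hhullK : closure (convexHull ℝ (S i)) ⊆ K :=
    closure_minimal (convexHull_min hSiK hKc) hK.isClosed
  refine hfδ x (hSiK hx) y (hhullK hy) ?_
  calc dist x y ≤ diam (closure (convexHull ℝ (S i))) :=
        dist_le_diam_of_mem (hK.isBounded.subset hhullK) (subset_closure
          (subset_convexHull ℝ _ hx)) hy
    _ = diam (S i) := by rw [diam_closure, convexHull_diam]
    _ < δ := hSδ i

theorem MeasureTheory.Measure.sum_restrict_of_ae_mem_iUnion {α ι : Type*} [MeasurableSpace α]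
    [Fintype ι] {μ : Measure α} {S : ι → Set α} (hSm : ∀ i, MeasurableSet (S i))
    (hSd : Pairwise (Disjoint on S)) (hμS : ∀ᵐ x ∂μ, x ∈ ⋃ i, S i) :
    ∑ i, μ.restrict (S i) = μ := by
  rw [← Measure.sum_fintype, ← Measure.restrict_iUnion hSd hSm,
    Measure.restrict_eq_self_of_ae_mem hμS]

theorem Continuous.integrable_of_ae_mem_isCompact {X F : Type*} [TopologicalSpace X]
    [T2Space X] [MeasurableSpace X] [OpensMeasurableSpace X] [NormedAddCommGroup F]
    {μ : Measure X} [IsFiniteMeasureOnCompacts μ] {K : Set X} {f : X → F}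
    (hf : Continuous f) (hK : IsCompact K) (hμK : ∀ᵐ x ∂μ, x ∈ K) : Integrable f μ := by
  rw [← Measure.restrict_eq_self_of_ae_mem hμK]
  exact hf.continuousOn.integrableOn_compact hK

theorem integral_piLp_eq_of_forall_integral_eval_eq {X ι : Type*} [MeasurableSpace X]
    [Fintype ι] {q : ENNReal} [Fact (1 ≤ q)] {E : ι → Type*} [∀ i, NormedAddCommGroup (E i)]
    [∀ i, NormedSpace ℝ (E i)] [∀ i, CompleteSpace (E i)] {f : X → PiLp q E}
    {μ ν : Measure X} (hμ : Integrable f μ) (hν : Integrable f ν)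
    (h : ∀ i, ∫ x, f x i ∂μ = ∫ x, f x i ∂ν) : ∫ x, f x ∂μ = ∫ x, f x ∂ν := by
  ext i
  rw [eval_integral_piLp hμ.eval_piLp, eval_integral_piLp hν.eval_piLp, h]

theorem ConvexOn.measureReal_univ_mul_map_average_le {α E : Type*} [MeasurableSpace α]
    [NormedAddCommGroup E] [NormedSpace ℝ E] [CompleteSpace E] {μ : Measure α}
    [IsFiniteMeasure μ] {s : Set E} {g : E → ℝ} {f : α → E} (hg : ConvexOn ℝ s g)
    (hgc : ContinuousOn g s) (hsc : IsClosed s) (hfs : ∀ᵐ x ∂μ, f x ∈ s)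
    (hfi : Integrable f μ) (hgi : Integrable (g ∘ f) μ) :
    μ.real univ * g (⨍ x, f x ∂μ) ≤ ∫ x, g (f x) ∂μ := by
  rcases eq_zero_or_neZero μ with rfl | hμ
  · simp
  calc μ.real univ * g (⨍ x, f x ∂μ) ≤ μ.real univ * ⨍ x, g (f x) ∂μ :=
        mul_le_mul_of_nonneg_left (hg.map_average_le hgc hsc hfs hfi hgi) measureReal_nonneg
    _ = ∫ x, g (f x) ∂μ := measure_smul_average μ _

theorem integral_le_integral_add_of_barycenter_eq {E : Type*} [NormedAddCommGroup E]
    [NormedSpace ℝ E] [CompleteSpace E] [MeasurableSpace E] {μ ν : Measure E}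
    [IsFiniteMeasure μ] [IsFiniteMeasure ν] {f : E → ℝ} {S : Set E} {ε : ℝ}
    (hf : ConvexOn ℝ univ f) (hfc : Continuous f) (hμS : ∀ᵐ x ∂μ, x ∈ S)
    (hfS : ∀ x ∈ S, ∀ y ∈ closure (convexHull ℝ S), dist (f x) (f y) < ε)
    (hμf : Integrable f μ) (hνf : Integrable f ν) (hμid : Integrable (fun x => x) μ)
    (hνid : Integrable (fun x => x) ν) (hmass : μ univ = ν univ)
    (hbar : ∫ x, x ∂μ = ∫ x, x ∂ν) :
    ∫ x, f x ∂μ ≤ ∫ x, f x ∂ν + ε * μ.real univ := by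
  rcases eq_zero_or_neZero μ with rfl | hμ
  · rw [eq_comm, Measure.coe_zero, Pi.zero_apply, Measure.measure_univ_eq_zero] at hmass
    simp [hmass]
  set b := ⨍ x, x ∂μ
  have hb : b ∈ closure (convexHull ℝ S) :=
    (convex_convexHull ℝ S).closure.average_mem isClosed_closure
      (hμS.mono fun x hx => subset_closure (subset_convexHull ℝ S hx)) hμid
  have hfb : ∀ᵐ x ∂μ, f x ≤ f b + ε := hμS.mono fun x hx => by
    linarith [(abs_sub_lt_iff.1 (hfS x hx b hb)).1]
  have hbν : b = ⨍ x, x ∂ν := by simp only [b, average_eq, measureReal_def, hmass, hbar]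
  calc ∫ x, f x ∂μ ≤ ∫ _, f b + ε ∂μ := integral_mono_ae hμf (integrable_const _) hfb
    _ = ν.real univ * f (⨍ x, x ∂ν) + ε * μ.real univ := by
        rw [integral_const, smul_eq_mul, ← hbν, measureReal_def, measureReal_def, hmass]; ring
    _ ≤ ∫ x, f x ∂ν + ε * μ.real univ := by
        gcongr
        exact hf.measureReal_univ_mul_map_average_le hfc.continuousOn isClosed_univ
          (.of_forall fun _ => mem_univ _) hνid hνf

theorem integral_le_integral_add_mul_of_forall_decomposition {E : Type*}
    [NormedAddCommGroup E] [NormedSpace ℝ E] [CompleteSpace E] [MeasurableSpace E]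
    [OpensMeasurableSpace E] {μ ν : Measure E} [IsFiniteMeasure μ] [IsFiniteMeasure ν]
    {K : Set E} (hK : IsCompact K) (hKc : Convex ℝ K) (hμK : ∀ᵐ x ∂μ, x ∈ K)
    (hνK : ∀ᵐ x ∂ν, x ∈ K) {f : E → ℝ} (hf : ConvexOn ℝ univ f) (hfc : Continuous f)
    {ε : ℝ} (hε : 0 < ε)
    (hmaj : ∀ (m : ℕ) (μs : Fin m → Measure E), ∑ i, μs i = μ →
      ∃ νs : Fin m → Measure E, ∑ i, νs i = ν ∧
        ∀ i, νs i univ = μs i univ ∧ ∫ x, x ∂νs i = ∫ x, x ∂μs i) :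
    ∫ x, f x ∂μ ≤ ∫ x, f x ∂ν + ε * μ.real univ := by
  obtain ⟨m, S, hSm, hSd, hSK, hfS⟩ :=
    hK.exists_measurable_partition_dist_lt hKc hfc.continuousOn hε
  have hμs : ∑ i, μ.restrict (S i) = μ :=
    Measure.sum_restrict_of_ae_mem_iUnion hSm hSd (hSK ▸ hμK)
  obtain ⟨νs, hνs, hνsμs⟩ := hmaj m _ hμs
  have (i : Fin m) : IsFiniteMeasure (νs i) :=
    isFiniteMeasure_of_le ν (hνs ▸ Finset.single_le_sum (fun j _ => (νs j).zero_le)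
      (Finset.mem_univ i))
  have hμf := hfc.integrable_of_ae_mem_isCompact hK hμK
  have hμid := continuous_id'.integrable_of_ae_mem_isCompact hK hμK
  have hνf := hfc.integrable_of_ae_mem_isCompact hK hνK
  have hνid := continuous_id'.integrable_of_ae_mem_isCompact hK hνK
  rw [← hνs] at hνf hνid
  calc ∫ x, f x ∂μ = ∑ i, ∫ x, f x ∂μ.restrict (S i) := by
        rw [← integral_finsetSum_measure fun i _ => hμf.restrict, hμs]
    _ ≤ ∑ i, (∫ x, f x ∂νs i + ε * (μ.restrict (S i)).real univ) := by
        gcongr with i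
        exact integral_le_integral_add_of_barycenter_eq hf hfc (ae_restrict_mem (hSm i))
          (hfS i) hμf.restrict (integrable_finsetSum_measure.1 hνf i (Finset.mem_univ i))
          hμid.restrict (integrable_finsetSum_measure.1 hνid i (Finset.mem_univ i))
          (hνsμs i).1.symm (hνsμs i).2.symm
    _ = ∫ x, f x ∂ν + ε * μ.real univ := by
        rw [Finset.sum_add_distrib, ← Finset.mul_sum,
          ← integral_finsetSum_measure (integrable_finsetSum_measure.1 hνf), hνs]
        simp only [measureReal_def]
        rw [← ENNReal.toReal_sum fun i _ => measure_ne_top _ _, ← Measure.finsetSum_apply, hμs]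

theorem decomposition_majorization_implies_convex_inequality_general {n : ℕ}
    (μ ν : Measure (EuclideanSpace ℝ (Fin n)))
    [IsFiniteMeasure μ] [IsFiniteMeasure ν]
    (hμc : ∃ K, IsCompact K ∧ μ Kᶜ = 0) (hνc : ∃ K, IsCompact K ∧ ν Kᶜ = 0)
    (hmaj : ∀ (m : ℕ) (μs : Fin m → Measure (EuclideanSpace ℝ (Fin n))),
      (∑ i, μs i) = μ →
      ∃ νs : Fin m → Measure (EuclideanSpace ℝ (Fin n)),
        (∑ i, νs i) = ν ∧
        ∀ i, νs i Set.univ = μs i Set.univ ∧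
          ∀ j : Fin n, ∫ x, x j ∂(νs i) = ∫ x, x j ∂(μs i)) :
    ∀ f : EuclideanSpace ℝ (Fin n) → ℝ, Continuous f → ConvexOn ℝ Set.univ f →
      ∫ x, f x ∂μ ≤ ∫ x, f x ∂ν := by
  intro f hfc hf
  obtain ⟨K₀, hK₀, hμK₀⟩ := hμc
  obtain ⟨K₁, hK₁, hνK₁⟩ := hνc
  obtain ⟨R, hR⟩ := (hK₀.union hK₁).isBounded.subset_closedBall 0
  have hK : IsCompact (closedBall (0 : EuclideanSpace ℝ (Fin n)) R) := isCompact_closedBall 0 R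
  have hμK : ∀ᵐ x ∂μ, x ∈ closedBall 0 R :=
    measure_mono_null (compl_subset_compl.2 (subset_union_left.trans hR)) hμK₀
  have hνK : ∀ᵐ x ∂ν, x ∈ closedBall 0 R :=
    measure_mono_null (compl_subset_compl.2 (subset_union_right.trans hR)) hνK₁
  have hμid := continuous_id'.integrable_of_ae_mem_isCompact hK hμK
  have hνid := continuous_id'.integrable_of_ae_mem_isCompact hK hνK
  refine le_of_forall_pos_le_add_mul (measureReal_nonneg (μ := μ) (s := univ)) fun ε hε =>
    integral_le_integral_add_mul_of_forall_decomposition hK (convex_closedBall 0 R) hμK hνK hf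
      hfc hε fun m μs hμs => ?_
  obtain ⟨νs, hνs, hνsμs⟩ := hmaj m μs hμs
  refine ⟨νs, hνs, fun i => ⟨(hνsμs i).1, integral_piLp_eq_of_forall_integral_eval_eq
    (integrable_finsetSum_measure.1 (hνs ▸ hνid) i (Finset.mem_univ i))
    (integrable_finsetSum_measure.1 (hμs ▸ hμid) i (Finset.mem_univ i)) (hνsμs i).2⟩⟩

/-- If `μ ≺ ν` in the decomposition sense (every finite decomposition of `μ` can be
matched by a decomposition of `ν` with the same masses and barycenter coordinates),
then `∫ f dμ ≤ ∫ f dν` for every continuous convex `f : ℝⁿ → ℝ`. -/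
theorem decomposition_majorization_implies_convex_inequality {n : ℕ}
    (μ ν : Measure (EuclideanSpace ℝ (Fin n)))
    [IsFiniteMeasure μ] [IsFiniteMeasure ν] [μ.Regular] [ν.Regular]
    (hμc : ∃ K, IsCompact K ∧ μ Kᶜ = 0) (hνc : ∃ K, IsCompact K ∧ ν Kᶜ = 0)
    (hmaj : ∀ (m : ℕ) (μs : Fin m → Measure (EuclideanSpace ℝ (Fin n))),
      (∑ i, μs i) = μ →
      ∃ νs : Fin m → Measure (EuclideanSpace ℝ (Fin n)),
        (∑ i, νs i) = ν ∧
        ∀ i, νs i Set.univ = μs i Set.univ ∧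
          ∀ j : Fin n, ∫ x, x j ∂(νs i) = ∫ x, x j ∂(μs i)) :
    ∀ f : EuclideanSpace ℝ (Fin n) → ℝ, Continuous f → ConvexOn ℝ Set.univ f →
      ∫ x, f x ∂μ ≤ ∫ x, f x ∂ν :=
  decomposition_majorization_implies_convex_inequality_general μ ν hμc hνc hmaj
end

section
/- Let ν : L^∞(Y, μ_Y) → L^∞(X, μ_X) be a doubly stochastic kernel between compactly supported Borel probability spaces in ℝⁿ with ν(πⱼ) = πⱼ for 1 ≤ j ≤ n (as elements of L^∞). Then for every finite decomposition μ_X = Σⱼ λⱼ into positive measures, the measures λⱼ' defined by λⱼ'(Δ) = λⱼ(ν(1_Δ)) = ∫ ν(1_Δ) dλⱼ satisfy Σⱼ λⱼ' = μ_Y, λⱼ'(1) = λⱼ(1), and λⱼ'(πᵢ) = λⱼ(πᵢ) for all i, j. In particular μ_X ≺ μ_Y in the decomposition sense. -/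
/-!
For `λ ≤ μX`, the set function `Δ ↦ ∫ ν(1_Δ) dλ` is finitely additive by linearity and positivity
of `ν`, and it is dominated by `μY` because `∫ ν(1_Δ) dμX = μY Δ`; domination makes it continuous
at `∅`, hence a measure `λ'`. Summing over a decomposition `μX = Σ λⱼ` gives `Σ λⱼ' = μY`, and
`ν 1 = 1` gives the masses. The identity `∫ g dλ' = ∫ ν g dλ` holds for simple `g` by linearity and
passes to bounded measurable `g` by uniform approximation, since a positive unital `ν` is a
contraction of `L^∞`; applied to the coordinates, which `ν` fixes, it gives the first moments.
-/

open MeasureTheory Filter Topology Function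
open scoped ENNReal

namespace MeasureTheory

variable {α : Type*} [MeasurableSpace α] {μX μY : Measure α}

section Maps

variable (ν : Lp ℝ ⊤ μY →ₗ[ℝ] Lp ℝ ⊤ μX)

def PreservesNonneg : Prop :=
  ∀ f : Lp ℝ ⊤ μY, (∀ᵐ y ∂μY, 0 ≤ f y) → ∀ᵐ x ∂μX, 0 ≤ ν f x

def PreservesOne : Prop :=
  ∀ f : Lp ℝ ⊤ μY, ((f : _ → ℝ) =ᵐ[μY] fun _ => 1) → ((ν f : _ → ℝ) =ᵐ[μX] fun _ => 1)

def PreservesMass : Prop :=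
  ∀ Δ : Set α, MeasurableSet Δ → ∀ f : Lp ℝ ⊤ μY, ((f : _ → ℝ) =ᵐ[μY] Δ.indicator 1) →
    ∫ x, ν f x ∂μX = (μY Δ).toReal

end Maps

lemma isSetRing_measurableSet : IsSetRing {s : Set α | MeasurableSet s} where
  empty_mem := MeasurableSet.empty
  union_mem _ _ := MeasurableSet.union
  sdiff_mem _ _ := MeasurableSet.diff

lemma Measure.le_finsetSum {ι : Type*} {s : Finset ι} (lam : ι → Measure α) {j : ι}
    (hj : j ∈ s) : lam j ≤ ∑ i ∈ s, lam i :=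
  Measure.le_iff'.2 fun t => by
    rw [Measure.coe_finsetSum, Finset.sum_apply]
    exact Finset.single_le_sum (f := fun k => lam k t) (fun _ _ => zero_le) hj

lemma exists_ae_abs_le_of_continuous {X : Type*} [TopologicalSpace X] [MeasurableSpace X]
    {μ : Measure X} (hμ : ∃ K, IsCompact K ∧ μ Kᶜ = 0) {g : X → ℝ} (hg : Continuous g) :
    ∃ R, ∀ᵐ y ∂μ, |g y| ≤ R := by
  obtain ⟨K, hK, hKc⟩ := hμ
  obtain ⟨R, hR⟩ := hK.exists_bound_of_continuousOn hg.continuousOn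
  exact ⟨R, measure_eq_zero_iff_ae_notMem.1 hKc |>.mono fun y hy => hR y (not_not.1 hy)⟩

section Indicator

variable (μ : Measure α) [IsFiniteMeasure μ]

open Classical in
/-- The class of `1_s` in `L^∞(μ)`, extended by `0` to non-measurable `s` so that it can feed an
`AddContent` defined on all sets. -/
noncomputable def indicatorLpTop (s : Set α) : Lp ℝ ⊤ μ :=
  if hs : MeasurableSet s then indicatorConstLp ⊤ hs (measure_ne_top μ s) 1 else 0

variable {μ}

lemma indicatorLpTop_of_measurableSet {s : Set α} (hs : MeasurableSet s) :
    indicatorLpTop μ s = indicatorConstLp ⊤ hs (measure_ne_top μ s) 1 :=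
  dif_pos hs

lemma coeFn_indicatorLpTop {s : Set α} (hs : MeasurableSet s) :
    indicatorLpTop μ s =ᵐ[μ] s.indicator 1 := by
  rw [indicatorLpTop_of_measurableSet hs]
  exact indicatorConstLp_coeFn

lemma indicatorLpTop_empty : indicatorLpTop μ (∅ : Set α) = 0 := by
  rw [indicatorLpTop_of_measurableSet MeasurableSet.empty, indicatorConstLp_empty]

lemma indicatorLpTop_union {s t : Set α} (hs : MeasurableSet s) (ht : MeasurableSet t)
    (hst : Disjoint s t) :
    indicatorLpTop μ (s ∪ t) = indicatorLpTop μ s + indicatorLpTop μ t := by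
  rw [indicatorLpTop_of_measurableSet hs, indicatorLpTop_of_measurableSet ht,
    indicatorLpTop_of_measurableSet (hs.union ht), indicatorConstLp_disjoint_union hs ht _ _ hst]

lemma eq_indicatorLpTop {s : Set α} (hs : MeasurableSet s) {f : Lp ℝ ⊤ μ}
    (hf : f =ᵐ[μ] s.indicator 1) : f = indicatorLpTop μ s :=
  Lp.ext (hf.trans (coeFn_indicatorLpTop hs).symm)

lemma indicatorLpTop_nonneg (s : Set α) : ∀ᵐ y ∂μ, 0 ≤ indicatorLpTop μ s y := by
  by_cases hs : MeasurableSet s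
  · filter_upwards [coeFn_indicatorLpTop hs] with y hy
    rw [hy]
    exact s.indicator_nonneg (fun _ _ => zero_le_one) y
  · rw [indicatorLpTop, dif_neg hs]
    filter_upwards [Lp.coeFn_zero ℝ ⊤ μ] with y hy
    rw [hy]; rfl

end Indicator

lemma Lp.integrable_top_of_le {μ lam : Measure α} [IsFiniteMeasure μ] (hlam : lam ≤ μ)
    (g : Lp ℝ ⊤ μ) : Integrable g lam :=
  ((Lp.memLp g).integrable le_top).mono_measure hlam

noncomputable def Lp.integralOfLe {μ lam : Measure α} [IsFiniteMeasure μ] (hlam : lam ≤ μ) :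
    Lp ℝ ⊤ μ →ₗ[ℝ] ℝ where
  toFun g := ∫ x, g x ∂lam
  map_add' f g := by
    rw [integral_congr_ae ((Lp.coeFn_add f g).filter_mono (ae_mono hlam))]
    exact integral_add (Lp.integrable_top_of_le hlam f) (Lp.integrable_top_of_le hlam g)
  map_smul' c f := by
    rw [integral_congr_ae ((Lp.coeFn_smul c f).filter_mono (ae_mono hlam))]
    exact integral_const_mul c _

lemma Lp.integralOfLe_apply {μ lam : Measure α} [IsFiniteMeasure μ] (hlam : lam ≤ μ)
    (g : Lp ℝ ⊤ μ) : Lp.integralOfLe hlam g = ∫ x, g x ∂lam :=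
  rfl

lemma exists_simpleFunc_abs_sub_le {g : α → ℝ} (hg : Measurable g) (D : ℝ) {ε : ℝ}
    (hε : 0 < ε) : ∃ φ : SimpleFunc α ℝ, ∀ x, |g x| ≤ D → |φ x - g x| ≤ ε := by
  set r : ℝ → ℝ := fun t => ε * ⌊max (-D) (min D t) / ε⌋
  have hr : Measurable r := by fun_prop
  have hrange : Set.range (r ∘ g) ⊆ (fun k : ℤ => ε * k) '' Set.Icc ⌊-|D| / ε⌋ ⌊|D| / ε⌋ := by
    rintro _ ⟨x, rfl⟩
    refine ⟨_, ⟨Int.floor_mono ?_, Int.floor_mono ?_⟩, rfl⟩ <;> gcongr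
    · exact (neg_le_neg (le_abs_self D)).trans (le_max_left _ _)
    · exact max_le (neg_le_abs D) ((min_le_left _ _).trans (le_abs_self D))
  refine ⟨⟨r ∘ g, fun y => hr.comp hg (measurableSet_singleton y),
    ((Set.finite_Icc _ _).image _).subset hrange⟩, fun x hx => ?_⟩
  have hclamp : max (-D) (min D (g x)) = g x := by
    rw [min_eq_right (abs_le.1 hx).2, max_eq_right (abs_le.1 hx).1]
  show |ε * ⌊max (-D) (min D (g x)) / ε⌋ - g x| ≤ ε
  have hfract : g x - ε * ⌊g x / ε⌋ = ε * Int.fract (g x / ε) := by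
    rw [← Int.self_sub_floor, mul_sub, mul_div_cancel₀ _ hε.ne']
  rw [hclamp, abs_sub_comm, hfract, abs_of_nonneg (mul_nonneg hε.le (Int.fract_nonneg _))]
  exact mul_le_of_le_one_right hε.le (Int.fract_lt_one _).le

lemma PreservesNonneg.ae_abs_le [IsFiniteMeasure μY] {ν : Lp ℝ ⊤ μY →ₗ[ℝ] Lp ℝ ⊤ μX}
    (hpos : PreservesNonneg ν) (hone : PreservesOne ν)
    {f : Lp ℝ ⊤ μY} {c : ℝ} (hf : ∀ᵐ y ∂μY, |f y| ≤ c) : ∀ᵐ x ∂μX, |ν f x| ≤ c := by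
  set one := Lp.const ⊤ μY (1 : ℝ)
  have hone_coe : one =ᵐ[μY] Function.const α 1 := Lp.coeFn_const ..
  have hone' : ν one =ᵐ[μX] fun _ => 1 := hone one hone_coe
  have hupper : ∀ᵐ x ∂μX, 0 ≤ ν (c • one - f) x := by
    refine hpos _ ?_
    filter_upwards [Lp.coeFn_sub (c • one) f, Lp.coeFn_smul c one,
      hone_coe, hf] with y hsub hsmul hconst hy
    rw [hsub, Pi.sub_apply, hsmul, Pi.smul_apply, hconst, Function.const_apply, smul_eq_mul,
      mul_one, sub_nonneg]
    exact (abs_le.1 hy).2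
  have hlower : ∀ᵐ x ∂μX, 0 ≤ ν (c • one + f) x := by
    refine hpos _ ?_
    filter_upwards [Lp.coeFn_add (c • one) f, Lp.coeFn_smul c one,
      hone_coe, hf] with y hadd hsmul hconst hy
    rw [hadd, Pi.add_apply, hsmul, Pi.smul_apply, hconst, Function.const_apply, smul_eq_mul,
      mul_one]
    linarith [(abs_le.1 hy).1]
  rw [map_sub, map_smul] at hupper
  rw [map_add, map_smul] at hlower
  filter_upwards [hupper, hlower, Lp.coeFn_sub (c • ν one) (ν f), Lp.coeFn_add (c • ν one) (ν f),
    Lp.coeFn_smul c (ν one), hone'] with x hu hl hsub hadd hsmul h1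
  rw [hsub, Pi.sub_apply, hsmul, Pi.smul_apply, h1, smul_eq_mul, mul_one] at hu
  rw [hadd, Pi.add_apply, hsmul, Pi.smul_apply, h1, smul_eq_mul, mul_one] at hl
  exact abs_le.2 ⟨by linarith, by linarith⟩

lemma PreservesNonneg.ae_indicatorLpTop_nonneg [IsFiniteMeasure μY]
    {ν : Lp ℝ ⊤ μY →ₗ[ℝ] Lp ℝ ⊤ μX} (hpos : PreservesNonneg ν) {lam : Measure α}
    (hlam : lam ≤ μX) (s : Set α) : ∀ᵐ x ∂lam, 0 ≤ ν (indicatorLpTop μY s) x :=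
  (hpos _ (indicatorLpTop_nonneg s)).filter_mono (ae_mono hlam)

section Dual

variable [IsFiniteMeasure μY] (ν : Lp ℝ ⊤ μY →ₗ[ℝ] Lp ℝ ⊤ μX) {lam : Measure α}

noncomputable def dualContent (hpos : PreservesNonneg ν) (hlam : lam ≤ μX) :
    AddContent ℝ≥0∞ {s : Set α | MeasurableSet s} :=
  isSetRing_measurableSet.addContent_of_union
    (fun s => ∫⁻ x, ENNReal.ofReal (ν (indicatorLpTop μY s) x) ∂lam)
    (lintegral_eq_zero_of_ae_eq_zero (((Lp.coeFn_zero ℝ ⊤ μX).filter_mono (ae_mono hlam)).mono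
      fun x hx => by
        show ENNReal.ofReal (ν (indicatorLpTop μY ∅) x) = 0
        rw [indicatorLpTop_empty, map_zero, hx, Pi.zero_apply, ENNReal.ofReal_zero]))
    fun {s t} hs ht hst => by
      rw [← lintegral_add_left'
        ((Lp.aestronglyMeasurable _).mono_measure hlam).aemeasurable.ennreal_ofReal]
      refine lintegral_congr_ae ?_
      filter_upwards [(Lp.coeFn_add (ν (indicatorLpTop μY s)) (ν (indicatorLpTop μY t))).filter_mono
        (ae_mono hlam),
        hpos.ae_indicatorLpTop_nonneg hlam s, hpos.ae_indicatorLpTop_nonneg hlam t]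
        with x hadd hs₀ ht₀
      rw [indicatorLpTop_union hs ht hst, map_add, hadd, Pi.add_apply,
        ENNReal.ofReal_add hs₀ ht₀]

variable [IsFiniteMeasure μX]

lemma lintegral_ofReal_apply_indicatorLpTop (hpos : PreservesNonneg ν) (hmass : PreservesMass ν)
    {s : Set α} (hs : MeasurableSet s) :
    ∫⁻ x, ENNReal.ofReal (ν (indicatorLpTop μY s) x) ∂μX = μY s := by
  rw [← ofReal_integral_eq_lintegral_ofReal (Lp.integrable_top_of_le le_rfl _)
    (hpos.ae_indicatorLpTop_nonneg le_rfl s), hmass s hs _ (coeFn_indicatorLpTop hs),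
    ENNReal.ofReal_toReal (measure_ne_top μY s)]

lemma dualContent_le (hpos : PreservesNonneg ν) (hmass : PreservesMass ν) (hlam : lam ≤ μX)
    {s : Set α} (hs : MeasurableSet s) : dualContent ν hpos hlam s ≤ μY s :=
  (lintegral_mono' hlam le_rfl).trans (lintegral_ofReal_apply_indicatorLpTop ν hpos hmass hs).le

lemma dualContent_iUnion (hpos : PreservesNonneg ν) (hmass : PreservesMass ν)
    (hlam : lam ≤ μX) ⦃f : ℕ → Set α⦄ (hf : ∀ i, MeasurableSet (f i))
    (hdisj : Pairwise (Disjoint on f)) :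
    dualContent ν hpos hlam (⋃ i, f i) = ∑' i, dualContent ν hpos hlam (f i) := by
  refine addContent_iUnion_eq_sum_of_tendsto_zero isSetRing_measurableSet _
    (fun s hs => ne_top_of_le_ne_top (measure_ne_top μY s) (dualContent_le ν hpos hmass hlam hs))
    (fun s hs hanti hempty => ?_) hf (MeasurableSet.iUnion hf) hdisj
  have hμY : Tendsto (fun n => μY (s n)) atTop (𝓝 0) := by
    have := tendsto_measure_iInter_atTop (fun n => (hs n).nullMeasurableSet) hanti
      ⟨0, measure_ne_top μY _⟩
    rwa [hempty, measure_empty] at this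
  exact tendsto_of_tendsto_of_tendsto_of_le_of_le tendsto_const_nhds hμY
    (fun _ => zero_le) fun n => dualContent_le ν hpos hmass hlam (hs n)

/-- The paper's `λ'`, with `λ'(Δ) = λ(ν(1_Δ))`. -/
noncomputable def dualMeasure (hpos : PreservesNonneg ν) (hmass : PreservesMass ν)
    (hlam : lam ≤ μX) : Measure α :=
  Measure.ofMeasurable (fun s _ => dualContent ν hpos hlam s) (addContent_empty)
    (dualContent_iUnion ν hpos hmass hlam)

lemma dualMeasure_apply (hpos : PreservesNonneg ν) (hmass : PreservesMass ν) (hlam : lam ≤ μX)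
    {s : Set α} (hs : MeasurableSet s) :
    dualMeasure ν hpos hmass hlam s = ∫⁻ x, ENNReal.ofReal (ν (indicatorLpTop μY s) x) ∂lam :=
  Measure.ofMeasurable_apply s hs

lemma dualMeasure_apply_eq_ofReal (hpos : PreservesNonneg ν) (hmass : PreservesMass ν)
    (hlam : lam ≤ μX) {s : Set α} (hs : MeasurableSet s) :
    dualMeasure ν hpos hmass hlam s = ENNReal.ofReal (∫ x, ν (indicatorLpTop μY s) x ∂lam) := by
  rw [dualMeasure_apply ν hpos hmass hlam hs, ofReal_integral_eq_lintegral_ofReal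
    (Lp.integrable_top_of_le hlam _) (hpos.ae_indicatorLpTop_nonneg hlam s)]

lemma dualMeasure_real_apply (hpos : PreservesNonneg ν) (hmass : PreservesMass ν)
    (hlam : lam ≤ μX) {s : Set α} (hs : MeasurableSet s) :
    (dualMeasure ν hpos hmass hlam).real s = ∫ x, ν (indicatorLpTop μY s) x ∂lam := by
  rw [measureReal_def, dualMeasure_apply_eq_ofReal ν hpos hmass hlam hs,
    ENNReal.toReal_ofReal (integral_nonneg_of_ae (hpos.ae_indicatorLpTop_nonneg hlam s))]

lemma dualMeasure_le (hpos : PreservesNonneg ν) (hmass : PreservesMass ν) (hlam : lam ≤ μX) :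
    dualMeasure ν hpos hmass hlam ≤ μY :=
  Measure.le_iff.2 fun _ hs =>
    (dualMeasure_apply ν hpos hmass hlam hs).trans_le (dualContent_le ν hpos hmass hlam hs)

instance (hpos : PreservesNonneg ν) (hmass : PreservesMass ν) (hlam : lam ≤ μX) :
    IsFiniteMeasure (dualMeasure ν hpos hmass hlam) :=
  isFiniteMeasure_of_le μY (dualMeasure_le ν hpos hmass hlam)

lemma dualMeasure_univ (hpos : PreservesNonneg ν) (hone : PreservesOne ν)
    (hmass : PreservesMass ν) (hlam : lam ≤ μX) :
    dualMeasure ν hpos hmass hlam Set.univ = lam Set.univ := by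
  have hν : ν (indicatorLpTop μY Set.univ) =ᵐ[μX] fun _ => 1 :=
    hone _ (by
      filter_upwards [coeFn_indicatorLpTop (μ := μY) MeasurableSet.univ] with y hy
      simp [hy])
  rw [dualMeasure_apply ν hpos hmass hlam MeasurableSet.univ, ← lintegral_one]
  refine lintegral_congr_ae ((hν.filter_mono (ae_mono hlam)).mono fun x hx => ?_)
  simp [hx]

lemma sum_dualMeasure {ι : Type*} [Fintype ι] (hpos : PreservesNonneg ν)
    (hmass : PreservesMass ν) {lam : ι → Measure α} (hlam : ∀ j, lam j ≤ μX)
    (hsum : ∑ j, lam j = μX) : ∑ j, dualMeasure ν hpos hmass (hlam j) = μY := by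
  ext s hs
  simp_rw [Measure.coe_finsetSum, Finset.sum_apply, dualMeasure_apply ν hpos hmass _ hs]
  rw [← lintegral_finsetSum_measure, hsum, lintegral_ofReal_apply_indicatorLpTop ν hpos hmass hs]

lemma integral_dualMeasure_simpleFunc (hpos : PreservesNonneg ν) (hmass : PreservesMass ν)
    (hlam : lam ≤ μX) (φ : SimpleFunc α ℝ) {f : Lp ℝ ⊤ μY} (hf : f =ᵐ[μY] φ) :
    ∫ x, φ x ∂(dualMeasure ν hpos hmass hlam) = ∫ x, ν f x ∂lam := by
  induction φ using SimpleFunc.induction generalizing f with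
  | @const c s hs =>
    have hφ : ⇑(SimpleFunc.piecewise s hs (SimpleFunc.const α c) (SimpleFunc.const α 0)) =
        s.indicator fun _ => c := by
      funext y
      by_cases hy : y ∈ s <;> simp [hy]
    have hf' : f = c • indicatorLpTop μY s := by
      refine Lp.ext ?_
      filter_upwards [hf, Lp.coeFn_smul c (indicatorLpTop μY s), coeFn_indicatorLpTop hs]
        with y hfy hsmul hind
      rw [hfy, hφ, hsmul, Pi.smul_apply, hind]
      by_cases hy : y ∈ s <;> simp [hy]
    rw [hφ, integral_indicator_const c hs, dualMeasure_real_apply ν hpos hmass hlam hs, hf',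
      ← Lp.integralOfLe_apply hlam, ← Lp.integralOfLe_apply hlam, map_smul, map_smul,
      smul_eq_mul, smul_eq_mul, mul_comm]
  | @add φ ψ _ hφ hψ =>
    set fφ := (φ.memLp_top μY).toLp φ
    set fψ := (ψ.memLp_top μY).toLp ψ
    have hf' : f = fφ + fψ := by
      refine Lp.ext ?_
      filter_upwards [hf, Lp.coeFn_add fφ fψ, (φ.memLp_top μY).coeFn_toLp,
        (ψ.memLp_top μY).coeFn_toLp] with y hfy hadd h1 h2
      rw [hfy, hadd, Pi.add_apply, h1, h2, SimpleFunc.coe_add, Pi.add_apply]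
    simp only [SimpleFunc.coe_add, Pi.add_apply]
    rw [integral_add (φ.integrable_of_isFiniteMeasure)
      (ψ.integrable_of_isFiniteMeasure), hφ (φ.memLp_top μY).coeFn_toLp,
      hψ (ψ.memLp_top μY).coeFn_toLp, hf', ← Lp.integralOfLe_apply hlam,
      ← Lp.integralOfLe_apply hlam, ← Lp.integralOfLe_apply hlam, map_add, map_add]

lemma integral_dualMeasure (hpos : PreservesNonneg ν) (hone : PreservesOne ν)
    (hmass : PreservesMass ν) (hlam : lam ≤ μX) {g : α → ℝ} (hg : Measurable g) {D : ℝ}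
    (hD : ∀ᵐ y ∂μY, |g y| ≤ D) {f : Lp ℝ ⊤ μY} (hf : f =ᵐ[μY] g) :
    ∫ x, g x ∂(dualMeasure ν hpos hmass hlam) = ∫ x, ν f x ∂lam := by
  set m := dualMeasure ν hpos hmass hlam
  have := isFiniteMeasure_of_le μX hlam
  refine eq_of_forall_dist_le fun δ hδ => ?_
  set C := m.real Set.univ + lam.real Set.univ + 1
  have hC : 0 < C := by positivity
  obtain ⟨φ, hφ⟩ := exists_simpleFunc_abs_sub_le hg D (div_pos hδ hC)
  set fφ := (φ.memLp_top μY).toLp φ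
  have hDm : ∀ᵐ y ∂m, |g y| ≤ D := hD.filter_mono (ae_mono (dualMeasure_le ν hpos hmass hlam))
  have hgφ : ∀ᵐ y ∂m, ‖g y - φ y‖ ≤ δ / C := hDm.mono fun y hy => by
    rw [Real.norm_eq_abs, abs_sub_comm]; exact hφ y hy
  have hfφ : ∀ᵐ y ∂μY, |(f - fφ) y| ≤ δ / C := by
    filter_upwards [Lp.coeFn_sub f fφ, hf, (φ.memLp_top μY).coeFn_toLp, hD] with y hsub hfy h1 hy
    rw [hsub, Pi.sub_apply, hfy, h1, abs_sub_comm]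
    exact hφ y hy
  have hνfφ : ∀ᵐ x ∂lam, ‖ν (f - fφ) x‖ ≤ δ / C :=
    ((hpos.ae_abs_le hone hfφ).filter_mono (ae_mono hlam)).mono fun x hx => by
      rwa [Real.norm_eq_abs]
  have hsplit : ∫ x, g x ∂m - ∫ x, ν f x ∂lam =
      ∫ x, (g x - φ x) ∂m - ∫ x, ν (f - fφ) x ∂lam := by
    rw [integral_sub (Integrable.of_bound hg.aestronglyMeasurable D hDm)
      φ.integrable_of_isFiniteMeasure,
      integral_dualMeasure_simpleFunc ν hpos hmass hlam φ (φ.memLp_top μY).coeFn_toLp,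
      ← Lp.integralOfLe_apply hlam, ← Lp.integralOfLe_apply hlam,
      ← Lp.integralOfLe_apply hlam, map_sub, map_sub]
    ring
  calc dist (∫ x, g x ∂m) (∫ x, ν f x ∂lam)
      ≤ ‖∫ x, (g x - φ x) ∂m‖ + ‖∫ x, ν (f - fφ) x ∂lam‖ := by
        rw [Real.dist_eq, hsplit]; exact abs_sub _ _
    _ ≤ δ / C * m.real Set.univ + δ / C * lam.real Set.univ :=
        add_le_add (norm_integral_le_of_norm_le_const hgφ)
          (norm_integral_le_of_norm_le_const hνfφ)
    _ ≤ δ := by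
        rw [← mul_add, div_mul_eq_mul_div, div_le_iff₀ hC]
        exact mul_le_mul_of_nonneg_left (by linarith) hδ.le

end Dual

end MeasureTheory

open MeasureTheory

theorem doubly_stochastic_kernel_gives_decomposition_majorization_general {n : ℕ}
    (μX μY : Measure (EuclideanSpace ℝ (Fin n)))
    [IsProbabilityMeasure μX] [IsProbabilityMeasure μY]
    (hμYc : ∃ K, IsCompact K ∧ μY Kᶜ = 0)
    (ν : Lp ℝ ⊤ μY →ₗ[ℝ] Lp ℝ ⊤ μX)
    (hpos : ∀ f : Lp ℝ ⊤ μY, (∀ᵐ y ∂μY, 0 ≤ f y) → ∀ᵐ x ∂μX, 0 ≤ ν f x)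
    (hunit : ∀ f : Lp ℝ ⊤ μY, ((f : _ → ℝ) =ᵐ[μY] fun _ => 1) →
      ((ν f : _ → ℝ) =ᵐ[μX] fun _ => 1))
    (hmass : ∀ Δ : Set (EuclideanSpace ℝ (Fin n)), MeasurableSet Δ →
      ∀ f : Lp ℝ ⊤ μY, ((f : _ → ℝ) =ᵐ[μY] Δ.indicator 1) →
      ∫ x, ν f x ∂μX = (μY Δ).toReal)
    (hfix : ∀ j : Fin n, ∀ f : Lp ℝ ⊤ μY, ((f : _ → ℝ) =ᵐ[μY] fun x => x j) →
      ((ν f : _ → ℝ) =ᵐ[μX] fun x => x j)) :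
    ∀ (m : ℕ) (lam : Fin m → Measure (EuclideanSpace ℝ (Fin n))),
      (∑ j, lam j) = μX →
      ∃ lam' : Fin m → Measure (EuclideanSpace ℝ (Fin n)),
        (∀ (j : Fin m) (Δ : Set (EuclideanSpace ℝ (Fin n))), MeasurableSet Δ →
          ∀ f : Lp ℝ ⊤ μY, ((f : _ → ℝ) =ᵐ[μY] Δ.indicator 1) →
            lam' j Δ = ENNReal.ofReal (∫ x, ν f x ∂(lam j))) ∧
        (∑ j, lam' j) = μY ∧
        (∀ j, lam' j Set.univ = lam j Set.univ) ∧
        (∀ j, ∀ i : Fin n, ∫ x, x i ∂(lam' j) = ∫ x, x i ∂(lam j)) := by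
  intro m lam hsum
  have hlam : ∀ j, lam j ≤ μX := fun j =>
    hsum ▸ Measure.le_finsetSum lam (Finset.mem_univ j)
  refine ⟨fun j => dualMeasure ν hpos hmass (hlam j), fun j Δ hΔ f hf => ?_,
    sum_dualMeasure ν hpos hmass hlam hsum, fun j => dualMeasure_univ ν hpos hunit hmass (hlam j),
    fun j i => ?_⟩
  · rw [eq_indicatorLpTop hΔ hf, dualMeasure_apply_eq_ofReal ν hpos hmass (hlam j) hΔ]
  · have hcont : Continuous fun x : EuclideanSpace ℝ (Fin n) => x i := by fun_prop
    obtain ⟨R, hR⟩ := exists_ae_abs_le_of_continuous hμYc hcont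
    have hmem : MemLp (fun x : EuclideanSpace ℝ (Fin n) => x i) ⊤ μY :=
      memLp_top_of_bound hcont.aestronglyMeasurable R (by simpa only [Real.norm_eq_abs] using hR)
    rw [integral_dualMeasure ν hpos hunit hmass (hlam j) hcont.measurable hR hmem.coeFn_toLp]
    exact integral_congr_ae ((hfix i _ hmem.coeFn_toLp).filter_mono (ae_mono (hlam j)))

/-- If `ν : L^∞(μ_Y) → L^∞(μ_X)` is a doubly stochastic kernel between compactly
supported Borel probability measures on `ℝⁿ` fixing the coordinate projections, then
every finite decomposition `μ_X = Σⱼ λⱼ` is matched by the decomposition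
`μ_Y = Σⱼ λⱼ'`, `λⱼ'(Δ) = ∫ ν(1_Δ) dλⱼ`, with the same masses and first moments;
in particular `μ_X ≺ μ_Y` in the decomposition sense. -/
theorem doubly_stochastic_kernel_gives_decomposition_majorization {n : ℕ}
    (μX μY : Measure (EuclideanSpace ℝ (Fin n)))
    [IsProbabilityMeasure μX] [IsProbabilityMeasure μY] [μX.Regular] [μY.Regular]
    (hμXc : ∃ K, IsCompact K ∧ μX Kᶜ = 0) (hμYc : ∃ K, IsCompact K ∧ μY Kᶜ = 0)
    (ν : Lp ℝ ⊤ μY →ₗ[ℝ] Lp ℝ ⊤ μX)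
    (hpos : ∀ f : Lp ℝ ⊤ μY, (∀ᵐ y ∂μY, 0 ≤ f y) → ∀ᵐ x ∂μX, 0 ≤ ν f x)
    (hunit : ∀ f : Lp ℝ ⊤ μY, ((f : _ → ℝ) =ᵐ[μY] fun _ => 1) →
      ((ν f : _ → ℝ) =ᵐ[μX] fun _ => 1))
    (hmass : ∀ Δ : Set (EuclideanSpace ℝ (Fin n)), MeasurableSet Δ →
      ∀ f : Lp ℝ ⊤ μY, ((f : _ → ℝ) =ᵐ[μY] Δ.indicator 1) →
      ∫ x, ν f x ∂μX = (μY Δ).toReal)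
    (hfix : ∀ j : Fin n, ∀ f : Lp ℝ ⊤ μY, ((f : _ → ℝ) =ᵐ[μY] fun x => x j) →
      ((ν f : _ → ℝ) =ᵐ[μX] fun x => x j)) :
    ∀ (m : ℕ) (lam : Fin m → Measure (EuclideanSpace ℝ (Fin n))),
      (∑ j, lam j) = μX →
      ∃ lam' : Fin m → Measure (EuclideanSpace ℝ (Fin n)),
        (∀ (j : Fin m) (Δ : Set (EuclideanSpace ℝ (Fin n))), MeasurableSet Δ →
          ∀ f : Lp ℝ ⊤ μY, ((f : _ → ℝ) =ᵐ[μY] Δ.indicator 1) →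
            lam' j Δ = ENNReal.ofReal (∫ x, ν f x ∂(lam j))) ∧
        (∑ j, lam' j) = μY ∧
        (∀ j, lam' j Set.univ = lam j Set.univ) ∧
        (∀ j, ∀ i : Fin n, ∫ x, x i ∂(lam' j) = ∫ x, x i ∂(lam j)) :=
  doubly_stochastic_kernel_gives_decomposition_majorization_general μX μY hμYc ν hpos hunit hmass
    hfix
end
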